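/- arXiv:1012.0129 — 2 statements merged into one kernel-verified Lean document; each statement's English description precedes it below -/
import Mathlib

section
/- Let G be a group isomorphic to ℤ^(m) ⊕ ℤ_{n_1} ⊕ … ⊕ ℤ_{n_k}, where each n_i ≥ 2 and n_{i+1} divides n_i for all 1 ≤ i ≤ k−1, and let H be a finite subgroup of G. Then H is isomorphic to ℤ_{m_1} ⊕ … ⊕ ℤ_{m_k} for some positive integers m_1, …, m_k with m_{i+1} dividing m_i for all 1 ≤ i ≤ k−1 and m_i dividing n_i for all 1 ≤ i ≤ k. -/
/-!
A finite subgroup of `G` embeds into the torsion part `T = ∏ ZMod (n i)`, because `ℤ^m` is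
torsion-free. For a finite abelian group `A ≅ ∏ ZMod (q i)`, a prime `p` and `t ≥ 0`, the subgroup
`p ^ t • A[p ^ (t + 1)]` has `p ^ #{i | p ^ (t + 1) ∣ q i}` elements, and an injective
homomorphism `A → T` embeds it into the corresponding subgroup of `T`. Put the subgroup in
invariant factor form `∏ ZMod (m i)` (sort the exponents of its primary decomposition prime by
prime, at most `k` of them by the case `t = 0`, and recombine by the Chinese remainder theorem).
Then `#{i | p ^ (t + 1) ∣ m i} ≤ #{i | p ^ (t + 1) ∣ n i}`, and since both sets are initial
segments of `Fin k`, every prime power dividing `m i` divides `n i`.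
-/

open Finset

section Layers

variable {A B : Type*} [AddCommGroup A] [AddCommGroup B]

variable (A) in
def nsmulTorsion (a b : ℕ) : AddSubgroup A :=
  (nsmulAddMonoidHom b : A →+ A).ker.map (nsmulAddMonoidHom a)

theorem card_nsmulTorsion_mul_card_ker [Finite A] {a b : ℕ} (hab : a ∣ b) :
    Nat.card (nsmulTorsion A a b) * Nat.card (nsmulAddMonoidHom a : A →+ A).ker =
      Nat.card (nsmulAddMonoidHom b : A →+ A).ker := by
  set K := (nsmulAddMonoidHom b : A →+ A).ker
  set g := (nsmulAddMonoidHom a : A →+ A).comp K.subtype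
  have hrange : g.range = nsmulTorsion A a b := by
    rw [AddMonoidHom.range_comp, AddSubgroup.range_subtype]; rfl
  have hker : Nat.card g.ker = Nat.card (nsmulAddMonoidHom a : A →+ A).ker := by
    have hle : (nsmulAddMonoidHom a : A →+ A).ker ≤ K := fun x hx => by
      obtain ⟨c, rfl⟩ := hab
      rw [AddMonoidHom.mem_ker, nsmulAddMonoidHom_apply] at hx ⊢
      rw [mul_nsmul, hx, nsmul_zero]
    exact Nat.card_congr
      { toFun x := ⟨x.1.1, x.2⟩
        invFun y := ⟨⟨y.1, hle y.2⟩, y.2⟩ }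
  rw [← hrange, ← hker, ← AddSubgroup.index_ker, mul_comm, AddSubgroup.card_mul_index]

theorem nsmulTorsion_map_le (f : A →+ B) (a b : ℕ) :
    (nsmulTorsion A a b).map f ≤ nsmulTorsion B a b := by
  rintro _ ⟨_, ⟨x, hx, rfl⟩, rfl⟩
  refine ⟨f x, ?_, (map_nsmul f a x).symm⟩
  rw [SetLike.mem_coe, AddMonoidHom.mem_ker, nsmulAddMonoidHom_apply] at hx ⊢
  rw [← map_nsmul, hx, map_zero]

theorem card_nsmulTorsion_le_of_injective [Finite B] {f : A →+ B} (hf : Function.Injective f)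
    (a b : ℕ) : Nat.card (nsmulTorsion A a b) ≤ Nat.card (nsmulTorsion B a b) :=
  AddSubgroup.card_map_of_injective hf ▸ AddSubgroup.card_le_of_le (nsmulTorsion_map_le f a b)

theorem card_ker_nsmul_pi_zmod {ι : Type*} [Fintype ι] (q : ι → ℕ) [∀ i, NeZero (q i)] (s : ℕ) :
    Nat.card (nsmulAddMonoidHom s : (∀ i, ZMod (q i)) →+ _).ker = ∏ i, (q i).gcd s := by
  have e : (nsmulAddMonoidHom s : (∀ i, ZMod (q i)) →+ _).ker ≃
      ∀ i, (nsmulAddMonoidHom s : ZMod (q i) →+ _).ker :=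
    (Equiv.subtypeEquivRight fun x => by simp [funext_iff]).trans Equiv.subtypePiEquivPi
  simp_rw [Nat.card_congr e, Nat.card_pi, IsAddCyclic.card_nsmulAddMonoidHom_ker, Nat.card_zmod]

theorem Nat.gcd_prime_pow_succ {p : ℕ} (hp : p.Prime) (q t : ℕ) :
    q.gcd (p ^ (t + 1)) = q.gcd (p ^ t) * if p ^ (t + 1) ∣ q then p else 1 := by
  split_ifs with h
  · rw [Nat.gcd_eq_right h, Nat.gcd_eq_right ((pow_dvd_pow p t.le_succ).trans h), pow_succ]
  · rw [mul_one]
    refine Nat.dvd_antisymm ?_ (Nat.gcd_dvd_gcd_of_dvd_right q (pow_dvd_pow p t.le_succ))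
    obtain ⟨c, hc, hgcd⟩ := (Nat.dvd_prime_pow hp).mp (Nat.gcd_dvd_right q (p ^ (t + 1)))
    have hct : c ≤ t := Nat.lt_add_one_iff.mp <| lt_of_le_of_ne hc fun hct => h <| by
      rw [← hct, ← hgcd]
      exact Nat.gcd_dvd_left q (p ^ (t + 1))
    exact Nat.dvd_gcd (Nat.gcd_dvd_left _ _) (hgcd ▸ pow_dvd_pow p hct)

theorem card_nsmulTorsion_pi_zmod {ι : Type*} [Fintype ι] (q : ι → ℕ) [∀ i, NeZero (q i)]
    {p : ℕ} (hp : p.Prime) (t : ℕ) :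
    Nat.card (nsmulTorsion (∀ i, ZMod (q i)) (p ^ t) (p ^ (t + 1))) =
      p ^ #{i | p ^ (t + 1) ∣ q i} := by
  have h := card_nsmulTorsion_mul_card_ker (A := ∀ i, ZMod (q i))
    (pow_dvd_pow p (t.le_add_right 1))
  rw [card_ker_nsmul_pi_zmod, card_ker_nsmul_pi_zmod] at h
  simp only [Nat.gcd_prime_pow_succ hp, prod_mul_distrib, prod_ite, prod_const,
    one_pow, mul_one] at h
  have hpos : 0 < ∏ i, (q i).gcd (p ^ t) :=
    prod_pos fun i _ => Nat.gcd_pos_of_pos_left _ (NeZero.pos _)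
  exact Nat.eq_of_mul_eq_mul_right hpos (h.trans (mul_comm _ _))

theorem card_filter_pow_dvd_le_of_injective {ι κ : Type*} [Fintype ι] [Fintype κ]
    {a : ι → ℕ} {b : κ → ℕ} [∀ i, NeZero (a i)] [∀ j, NeZero (b j)]
    {f : (∀ i, ZMod (a i)) →+ ∀ j, ZMod (b j)} (hf : Function.Injective f)
    {p : ℕ} (hp : p.Prime) (t : ℕ) :
    #{i | p ^ (t + 1) ∣ a i} ≤ #{j | p ^ (t + 1) ∣ b j} := by
  have h := card_nsmulTorsion_le_of_injective hf (p ^ t) (p ^ (t + 1))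
  rwa [card_nsmulTorsion_pi_zmod _ hp, card_nsmulTorsion_pi_zmod _ hp,
    Nat.pow_le_pow_iff_right hp.one_lt] at h

end Layers

theorem Fin.dvd_of_le_of_forall_succ_dvd {k : ℕ} {n : Fin k → ℕ}
    (h : ∀ i : Fin k, ∀ h : (i : ℕ) + 1 < k, n ⟨(i : ℕ) + 1, h⟩ ∣ n i) {i j : Fin k}
    (hij : i ≤ j) : n j ∣ n i := by
  let f : ℕ → ℕ := fun l => if hl : l < k then n ⟨l, hl⟩ else 1
  have hf : ∀ l, f (l + 1) ∣ f l := by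
    intro l
    by_cases hl : l + 1 < k
    · simpa [f, hl, (Nat.lt_succ_self l).trans hl] using h ⟨l, (Nat.lt_succ_self l).trans hl⟩ hl
    · simp [f, hl]
  have := Nat.rel_of_forall_rel_succ_of_le (fun x y : ℕ => y ∣ x) hf (Fin.le_def.mp hij)
  simpa [f] using this

theorem dvd_of_card_filter_pow_dvd_le {k : ℕ} {m n : Fin k → ℕ}
    (hm : ∀ i j, i ≤ j → m j ∣ m i) (hn : ∀ i j, i ≤ j → n j ∣ n i)
    (hcount : ∀ p t, p.Prime → #{i | p ^ (t + 1) ∣ m i} ≤ #{i | p ^ (t + 1) ∣ n i})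
    (i : Fin k) : m i ∣ n i := by
  refine (Nat.dvd_iff_prime_pow_dvd_dvd (n i) (m i)).mpr ?_
  rintro p (_ | t) hp hpm
  · simp
  by_contra hpn
  have hm_card : (i : ℕ) + 1 ≤ #{j | p ^ (t + 1) ∣ m j} := by
    rw [← Fin.card_Iic]
    exact card_le_card fun j hj => mem_filter.mpr ⟨mem_univ j, hpm.trans (hm j i (mem_Iic.mp hj))⟩
  have hn_card : #{j | p ^ (t + 1) ∣ n j} ≤ i := by
    rw [← Fin.card_Iio]
    refine card_le_card fun j hj => mem_Iio.mpr (lt_of_not_ge fun hij => hpn ?_)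
    exact (mem_filter.mp hj).2.trans (hn i j hij)
  have := hcount p t hp
  omega


theorem nonempty_addEquiv_pi_zmod_of_injective {ι κ : Type*} {a : ι → ℕ} {b : κ → ℕ}
    {τ : ι → κ} (hτ : Function.Injective τ) (hab : ∀ j, b (τ j) = a j)
    (hb : ∀ x, x ∉ Set.range τ → b x = 1) :
    Nonempty ((∀ j, ZMod (a j)) ≃+ ∀ x, ZMod (b x)) := by
  classical
  have : Unique (∀ x : {x // x ∉ Set.range τ}, ZMod (b x)) :=
    @Pi.unique _ _ fun x => (ZMod.ringEquivCongr (hb x x.2)).toEquiv.unique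
  have onRange : (∀ j, ZMod (a j)) ≃+ ∀ x : {x // x ∈ Set.range τ}, ZMod (b x) :=
    (AddEquiv.piCongrRight fun j => (ZMod.ringEquivCongr (hab j).symm).toAddEquiv).trans
      (RingEquiv.piCongrLeft (fun x : Set.range τ => ZMod (b x)) (.ofInjective τ hτ)).toAddEquiv
  exact ⟨onRange.trans <| AddEquiv.prodUnique.symm.trans
    (RingEquiv.piEquivPiSubtypeProd (· ∈ Set.range τ) (fun x => ZMod (b x))).symm.toAddEquiv⟩

theorem exists_addEquiv_pi_zmod_prime_pow (A : Type*) [AddCommGroup A] [Finite A] :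
    ∃ (ι : Type) (_ : Fintype ι) (p e : ι → ℕ), (∀ j, (p j).Prime) ∧ (∀ j, e j ≠ 0) ∧
      Nonempty (A ≃+ ∀ j, ZMod (p j ^ e j)) := by
  obtain ⟨ι, _, p, hp, e, ⟨φ⟩⟩ := AddCommGroup.equiv_directSum_zmod_of_finite A
  obtain ⟨ψ⟩ := nonempty_addEquiv_pi_zmod_of_injective (a := fun j : {j // e j ≠ 0} => p j ^ e j)
    (b := fun j => p j ^ e j) Subtype.val_injective (fun _ => rfl) fun j hj => by
      rw [not_not.mp fun hj' => hj ⟨⟨j, hj'⟩, rfl⟩, pow_zero]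
  exact ⟨{j // e j ≠ 0}, inferInstance, fun j => p j, fun j => e j, fun j => hp j, fun j => j.2,
    ⟨φ.trans ((DirectSum.addEquivProd _).trans ψ.symm)⟩⟩

theorem exists_antitone_of_card_le {ι : Type*} [Fintype ι] (e : ι → ℕ) {k : ℕ}
    (hk : Fintype.card ι ≤ k) :
    ∃ σ : ι → Fin k, Function.Injective σ ∧ ∃ u : Fin k → ℕ, Antitone u ∧
      (∀ j, u (σ j) = e j) ∧ ∀ i, i ∉ Set.range σ → u i = 0 := by
  set N := Fintype.card ι
  let c : ι ≃ Fin N := Fintype.equivFin ι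
  let π := Tuple.sort (e ∘ c.symm)
  let w : Fin N → ℕ := e ∘ c.symm ∘ π
  have hw : Monotone w := Tuple.monotone_sort (e ∘ c.symm)
  -- the `x`-th smallest value of `e` goes to position `N - 1 - x`
  let pos : Fin N → Fin k := fun x => Fin.castLE hk x.rev
  let u : Fin k → ℕ := fun i => if h : (i : ℕ) < N then w (Fin.rev ⟨i, h⟩) else 0
  have hu : ∀ x, u (pos x) = w x := fun x => by
    rw [show u (pos x) = w (Fin.rev x.rev) from dif_pos x.rev.isLt, Fin.rev_rev]
  have hpos : ∀ (i : Fin k) (h : (i : ℕ) < N), pos (Fin.rev ⟨i, h⟩) = i := fun i h =>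
    Fin.ext (by simp [pos])
  refine ⟨fun j => pos (π.symm (c j)), fun j j' h => ?_, u, fun i i' hii' => ?_, fun j => ?_,
    fun i hi => dif_neg fun h => hi ⟨c.symm (π (Fin.rev ⟨i, h⟩)), by simp [hpos]⟩⟩
  · exact c.injective (π.symm.injective (Fin.rev_injective (Fin.castLE_injective hk h)))
  · by_cases h' : (i' : ℕ) < N
    · have h : (i : ℕ) < N := lt_of_le_of_lt hii' h'
      simp only [u, dif_pos h, dif_pos h']
      exact hw (Fin.rev_le_rev.mpr hii')
    · simp [u, h']
  · simp [hu, w]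

theorem exists_invariant_factors_pi_zmod_prime_pow {ι : Type*} [Fintype ι] {p : ι → ℕ}
    (hp : ∀ j, (p j).Prime) (e : ι → ℕ) {k : ℕ} (hk : ∀ q, #{j | p j = q} ≤ k) :
    ∃ m : Fin k → ℕ, (∀ i, m i ≠ 0) ∧ (∀ i j, i ≤ j → m j ∣ m i) ∧
      Nonempty ((∀ j, ZMod (p j ^ e j)) ≃+ ∀ i, ZMod (m i)) := by
  classical
  choose σ hσ u hu hσu hu0 using fun q => exists_antitone_of_card_le
    (fun j : {j // p j = q} => e j) ((Fintype.card_subtype _).trans_le (hk q))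
  let P : Finset ℕ := univ.image p
  have hP : ∀ q : P, (q : ℕ).Prime := fun q => by
    obtain ⟨j, -, hj⟩ := mem_image.mp q.2
    exact hj ▸ hp j
  -- `m i` is the product over the primes `q` of the `i`-th largest `q`-primary factor
  refine ⟨fun i => ∏ q : P, (q : ℕ) ^ u q i,
    fun i => prod_ne_zero_iff.mpr fun q _ => pow_ne_zero _ (hP q).ne_zero,
    fun i j hij => prod_dvd_prod_of_dvd _ _ fun q _ => pow_dvd_pow _ (hu q hij), ?_⟩
  let τ : ι → Σ _ : Fin k, P := fun j => ⟨σ (p j) ⟨j, rfl⟩, ⟨p j, mem_image_of_mem p (mem_univ j)⟩⟩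
  have hστ : ∀ q (x : {j // p j = q}), σ (p x) ⟨x, rfl⟩ = σ q x := by rintro q ⟨x, rfl⟩; rfl
  have hτ : Function.Injective τ := fun j j' h => by
    simp only [τ, Sigma.mk.inj_iff, heq_eq_eq, Subtype.mk.injEq] at h
    rw [hστ (p j) ⟨j', h.2.symm⟩] at h
    exact congrArg Subtype.val (hσ _ h.1)
  obtain ⟨φ⟩ := nonempty_addEquiv_pi_zmod_of_injective (a := fun j => p j ^ e j)
    (b := fun x : Σ _ : Fin k, P => (x.2 : ℕ) ^ u x.2 x.1) hτ (fun j => by simp [τ, hσu])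
    (by
      rintro ⟨i, q, hq⟩ hiq
      show q ^ u q i = 1
      rw [hu0 q i fun ⟨⟨j, hj⟩, hji⟩ => hiq ⟨j, ?_⟩, pow_zero]
      subst hj hji
      rfl)
  have hcop : ∀ i, Pairwise fun q q' : P => ((q : ℕ) ^ u q i).Coprime ((q' : ℕ) ^ u q' i) :=
    fun i q q' hqq' => Nat.Coprime.pow _ _
      ((Nat.coprime_primes (hP q) (hP q')).mpr (Subtype.coe_injective.ne hqq'))
  exact ⟨φ.trans <|
    (LinearEquiv.piCurry ℤ fun (i : Fin k) (q : P) => ZMod ((q : ℕ) ^ u q i)).toAddEquiv.trans <|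
    AddEquiv.piCongrRight fun i => (ZMod.prodEquivPi _ (hcop i)).symm.toAddEquiv⟩


theorem exists_invariant_factors_of_injective {k : ℕ} {n : Fin k → ℕ} [∀ i, NeZero (n i)]
    (hn : ∀ i j, i ≤ j → n j ∣ n i) {A : Type*} [AddCommGroup A] [Finite A]
    {f : A →+ ∀ i, ZMod (n i)} (hf : Function.Injective f) :
    ∃ m : Fin k → ℕ, (∀ i, m i ≠ 0) ∧ (∀ i j, i ≤ j → m j ∣ m i) ∧ (∀ i, m i ∣ n i) ∧
      Nonempty (A ≃+ ∀ i, ZMod (m i)) := by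
  classical
  obtain ⟨ι, _, p, e, hp, he, ⟨φ⟩⟩ := exists_addEquiv_pi_zmod_prime_pow A
  have : ∀ j, NeZero (p j ^ e j) := fun j => ⟨pow_ne_zero _ (hp j).ne_zero⟩
  have hk : ∀ q, #{j | p j = q} ≤ k := by
    intro q
    by_cases hq : q.Prime
    · calc #{j | p j = q} ≤ #{j | q ^ (0 + 1) ∣ p j ^ e j} :=
            card_le_card <| monotone_filter_right _ fun j _ (hj : p j = q) => by
              simpa [hj] using dvd_pow_self q (he j)
        _ ≤ #{i | q ^ (0 + 1) ∣ n i} :=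
            card_filter_pow_dvd_le_of_injective (f := f.comp φ.symm.toAddMonoidHom)
              (hf.comp φ.symm.injective) hq 0
        _ ≤ k := (card_filter_le _ _).trans_eq (card_fin k)
    · rw [card_eq_zero.mpr (filter_eq_empty_iff.mpr fun j _ (hj : p j = q) => hq (hj ▸ hp j))]
      exact Nat.zero_le k
  obtain ⟨m, hm0, hm, ⟨ψ⟩⟩ := exists_invariant_factors_pi_zmod_prime_pow hp e hk
  have : ∀ i, NeZero (m i) := fun i => ⟨hm0 i⟩
  have hmn : ∀ i, m i ∣ n i := dvd_of_card_filter_pow_dvd_le hm hn fun q t hq =>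
    card_filter_pow_dvd_le_of_injective (f := f.comp (φ.trans ψ).symm.toAddMonoidHom)
      (hf.comp (φ.trans ψ).symm.injective) hq t
  exact ⟨m, hm0, hm, hmn, ⟨φ.trans ψ⟩⟩

theorem AddMonoidHom.injective_snd_comp_of_finite {A X Y : Type*} [AddGroup A]
    [AddCommGroup X] [AddCommGroup Y] [Finite A] [IsAddTorsionFree X] {f : A →+ X × Y}
    (hf : Function.Injective f) : Function.Injective ((AddMonoidHom.snd X Y).comp f) := by
  refine (injective_iff_map_eq_zero _).mpr fun a ha => hf ?_
  have hfst : (f a).1 = 0 := by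
    rw [← nsmul_eq_zero_iff_right (Nat.card_pos (α := A)).ne', ← Prod.smul_fst, ← map_nsmul,
      card_nsmul_eq_zero', map_zero, Prod.fst_zero]
  rw [map_zero]
  exact Prod.ext hfst ha

/-- **Structure of finite subgroups of finitely generated abelian groups.**
If `G ≅ ℤ^(m) ⊕ ℤ_{n_1} ⊕ … ⊕ ℤ_{n_k}` with each `n_i ≥ 2` and `n_{i+1} ∣ n_i`,
and `H ≤ G` is a finite subgroup, then `H ≅ ℤ_{m_1} ⊕ … ⊕ ℤ_{m_k}` for some
positive integers `m_i` with `m_{i+1} ∣ m_i` and `m_i ∣ n_i`. -/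
theorem finite_subgroup_structure (G : Type) [Group G] (m k : ℕ) (n : Fin k → ℕ)
    (hn : ∀ i : Fin k, 2 ≤ n i)
    (hdvd : ∀ i : Fin k, ∀ h : (i : ℕ) + 1 < k, n ⟨(i : ℕ) + 1, h⟩ ∣ n i)
    (hG : Nonempty (G ≃* Multiplicative ((Fin m → ℤ) × ((i : Fin k) → ZMod (n i)))))
    (H : Subgroup G) (hH : Finite H) :
    ∃ mm : Fin k → ℕ, (∀ i : Fin k, 1 ≤ mm i) ∧
      (∀ i : Fin k, ∀ h : (i : ℕ) + 1 < k, mm ⟨(i : ℕ) + 1, h⟩ ∣ mm i) ∧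
      (∀ i : Fin k, mm i ∣ n i) ∧
      Nonempty (H ≃* Multiplicative ((i : Fin k) → ZMod (mm i))) := by
  obtain ⟨iso⟩ := hG
  have : ∀ i, NeZero (n i) := fun i => ⟨(two_pos.trans_le (hn i)).ne'⟩
  let f : Additive H →+ (Fin m → ℤ) × ∀ i, ZMod (n i) :=
    MonoidHom.toAdditiveLeft (iso.toMonoidHom.comp H.subtype)
  have hf : Function.Injective f := iso.injective.comp H.subtype_injective
  let g := (AddMonoidHom.snd _ _).comp f
  have hg : Function.Injective g := AddMonoidHom.injective_snd_comp_of_finite hf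
  obtain ⟨mm, hmm0, hmm, hmmn, ⟨ψ⟩⟩ := exists_invariant_factors_of_injective
    (fun i j hij => Fin.dvd_of_le_of_forall_succ_dvd hdvd hij) (f := g.range.subtype)
    Subtype.val_injective
  exact ⟨mm, fun i => Nat.one_le_iff_ne_zero.mpr (hmm0 i),
    fun i h => hmm i _ (Fin.le_def.mpr (Nat.le_succ _)), hmmn,
    ⟨AddEquiv.toMultiplicativeRight ((AddMonoidHom.ofInjective hg).trans ψ)⟩⟩
end

section
/- Let G be an infinite finitely generated abelian group isomorphic to ℤ^(m) ⊕ ℤ_{n_1} ⊕ … ⊕ ℤ_{n_k}, where m ≥ 1, each n_i ≥ 2, and n_{i+1} divides n_i for all 1 ≤ i ≤ k−1. If G is S_2-capable, then m ≥ 3. -/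
/-- The commutator `[a,b] = a⁻¹ * b⁻¹ * a * b`. -/
def pcomm {E : Type} [Group E] (a b : E) : E := a⁻¹ * b⁻¹ * a * b

/-- The word `w(x,y,z,u) = [[x,y],[z,u]]` defining the variety `S_2` of metabelian groups. -/
def metaW {E : Type} [Group E] (x y z u : E) : E := pcomm (pcomm x y) (pcomm z u)

/-- The marginal set of a group `E` with respect to the variety `S_2` of metabelian
groups: all `a ∈ E` such that replacing any one argument `g` of `w` by `g * a`
leaves the value of `w` unchanged. -/
def s2MarginalSet (E : Type) [Group E] : Set E :=
  {a : E | ∀ x y z u : E,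
    metaW (x * a) y z u = metaW x y z u ∧
    metaW x (y * a) z u = metaW x y z u ∧
    metaW x y (z * a) u = metaW x y z u ∧
    metaW x y z (u * a) = metaW x y z u}

/-- `G` is `S_2`-capable if `G ≅ E / V*(E)` for some group `E`, where `V*(E)` is the
marginal (normal) subgroup of `E` with respect to the variety of metabelian groups,
i.e. the normal subgroup whose underlying set is `s2MarginalSet E`. -/
def IsS2Capable (G : Type) [Group G] : Prop :=
  ∃ (E : Type) (_ : Group E) (H : Subgroup E) (_ : H.Normal),
    (H : Set E) = s2MarginalSet E ∧ Nonempty (G ≃* E ⧸ H)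

/-!
Since `E / V*(E) ≅ G` is abelian, every commutator of `E` is marginal. This makes
`w = [[x,y],[z,u]]` central, multiplicative in each argument and invariant under the rotation
`w(u,z,x,y) = w(x,y,z,u)`. Let `N = ∏ nᵢ` and suppose `m ≤ 2`, so the free part of `G` is
generated by the images of two elements `a, b`. Every `x ^ N` lies in the subgroup generated by
`a`, `b` and `V*(E)`, on which `w` vanishes: either an argument is marginal, or all four lie in
`{a, b}`, and then `[x,y]` and `[z,u]` are trivial or equal up to inversion. Hence
`w(x,y,z,u) ^ N⁴ = w(xᴺ,yᴺ,zᴺ,uᴺ) = 1`, so `a ^ N⁴` is marginal although its image in `G` has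
infinite order.
-/

section Commutators

variable {E : Type} [Group E]

lemma pcomm_swap (a b : E) : pcomm b a = (pcomm a b)⁻¹ := by
  simp only [pcomm]; group

lemma pcomm_mul_left (a b d : E) : pcomm (a * b) d = b⁻¹ * pcomm a d * b * pcomm b d := by
  simp only [pcomm]; group

lemma pcomm_conj (g a b : E) : pcomm (g⁻¹ * a * g) (g⁻¹ * b * g) = g⁻¹ * pcomm a b * g := by
  simp only [pcomm]; group

lemma conj_eq_mul_pcomm (g x : E) : g⁻¹ * x * g = x * pcomm x g := by
  simp only [pcomm]; group

lemma pcomm_inv_right_of_commute {a b : E} (h : Commute (pcomm a b) b) :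
    pcomm a b⁻¹ = (pcomm a b)⁻¹ := by
  have h' : b * pcomm a b * b⁻¹ = pcomm a b := by rw [← h.eq, mul_inv_cancel_right]
  calc pcomm a b⁻¹ = (b * pcomm a b * b⁻¹)⁻¹ := by simp only [pcomm]; group
    _ = (pcomm a b)⁻¹ := by rw [h']

lemma map_pcomm {F : Type} [Group F] (f : E →* F) (a b : E) :
    f (pcomm a b) = pcomm (f a) (f b) := by
  simp only [pcomm, map_mul, map_inv]

lemma pcomm_eq_one {C : Type} [CommGroup C] (a b : C) : pcomm a b = 1 := by
  rw [pcomm, mul_right_comm a⁻¹, inv_mul_cancel, one_mul, inv_mul_cancel]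

lemma metaW_conj (g x y z u : E) :
    metaW (g⁻¹ * x * g) (g⁻¹ * y * g) (g⁻¹ * z * g) (g⁻¹ * u * g) = g⁻¹ * metaW x y z u * g := by
  simp only [metaW, pcomm_conj]

lemma metaW_swap_pairs (x y z u : E) : metaW z u x y = (metaW x y z u)⁻¹ :=
  pcomm_swap _ _

lemma metaW_eq_one_of_mem_pair {a b x y z u : E} (hx : x ∈ ({a, b} : Set E))
    (hy : y ∈ ({a, b} : Set E)) (hz : z ∈ ({a, b} : Set E)) (hu : u ∈ ({a, b} : Set E)) :
    metaW x y z u = 1 := by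
  simp only [Set.mem_insert_iff, Set.mem_singleton_iff] at hx hy hz hu
  rcases hx with rfl | rfl <;> rcases hy with rfl | rfl <;> rcases hz with rfl | rfl <;>
    rcases hu with rfl | rfl <;> simp only [metaW, pcomm] <;> group

lemma pcomm_mem_of_mulEquiv {C : Type} [CommGroup C] {H : Subgroup E} [H.Normal]
    (e : C ≃* E ⧸ H) (x y : E) : pcomm x y ∈ H := by
  rw [← QuotientGroup.eq_one_iff, ← QuotientGroup.mk'_apply, map_pcomm]
  obtain ⟨p, hp⟩ := e.surjective (QuotientGroup.mk' H x)
  obtain ⟨q, hq⟩ := e.surjective (QuotientGroup.mk' H y)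
  rw [← hp, ← hq, ← e.coe_toMonoidHom, ← map_pcomm, pcomm_eq_one, map_one]

end Commutators

section Marginal

variable {E : Type} [Group E]

lemma metaW_eq_one_of_mem_s2MarginalSet {a : E} (ha : a ∈ s2MarginalSet E) (y z u : E) :
    metaW a y z u = 1 := by
  simpa only [one_mul, metaW, pcomm, inv_one, mul_one, inv_mul_cancel] using (ha 1 y z u).1

variable (hcomm : ∀ x y : E, pcomm x y ∈ s2MarginalSet E)
include hcomm

lemma commute_metaW (x y z u g : E) : Commute (metaW x y z u) g := by
  have hfix : g⁻¹ * metaW x y z u * g = metaW x y z u := by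
    rw [← metaW_conj, conj_eq_mul_pcomm, conj_eq_mul_pcomm, conj_eq_mul_pcomm,
      conj_eq_mul_pcomm, (hcomm x g _ _ _ _).1, (hcomm y g _ _ _ _).2.1,
      (hcomm z g _ _ _ _).2.2.1, (hcomm u g _ _ _ _).2.2.2]
  calc metaW x y z u * g = g * (g⁻¹ * metaW x y z u * g) := by group
    _ = g * metaW x y z u := by rw [hfix]

lemma metaW_mul_left (x₁ x₂ y z u : E) :
    metaW (x₁ * x₂) y z u = metaW x₁ y z u * metaW x₂ y z u := by
  have hconj : metaW (x₂⁻¹ * x₁ * x₂) (x₂⁻¹ * y * x₂) z u = metaW x₁ y z u := by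
    rw [conj_eq_mul_pcomm, conj_eq_mul_pcomm, (hcomm x₁ x₂ _ _ _ _).1, (hcomm y x₂ _ _ _ _).2.1]
  calc metaW (x₁ * x₂) y z u
      = pcomm (x₂⁻¹ * pcomm x₁ y * x₂ * pcomm x₂ y) (pcomm z u) := by
        rw [metaW, pcomm_mul_left]
    _ = (pcomm x₂ y)⁻¹ * metaW x₁ y z u * pcomm x₂ y * metaW x₂ y z u := by
        rw [← pcomm_conj, pcomm_mul_left, ← hconj]; rfl
    _ = metaW x₁ y z u * metaW x₂ y z u := by
        rw [mul_assoc _ (metaW x₁ y z u), (commute_metaW hcomm x₁ y z u (pcomm x₂ y)).eq,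
          inv_mul_cancel_left]

-- Rotating moves each argument into the first slot, where `metaW_mul_left` applies.
lemma metaW_rotate (x y z u : E) : metaW u z x y = metaW x y z u := by
  rw [metaW_swap_pairs, metaW, pcomm_swap z u,
    pcomm_inv_right_of_commute (commute_metaW hcomm x y z u _), inv_inv, metaW]

def metaWLeftHom (y z u : E) : E →* E :=
  MonoidHom.mk' (metaW · y z u) fun a b => metaW_mul_left hcomm a b y z u

lemma metaW_pow_left (x y z u : E) (c : ℕ) : metaW (x ^ c) y z u = metaW x y z u ^ c :=
  map_pow (metaWLeftHom hcomm y z u) x c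

lemma metaW_pow_pow_pow_pow (x y z u : E) (c : ℕ) :
    metaW (x ^ c) (y ^ c) (z ^ c) (u ^ c) = metaW x y z u ^ (c ^ 4) := by
  rw [metaW_pow_left hcomm, ← metaW_rotate hcomm, metaW_pow_left hcomm, ← metaW_rotate hcomm,
    metaW_pow_left hcomm, ← metaW_rotate hcomm, metaW_pow_left hcomm, ← metaW_rotate hcomm]
  simp only [← pow_mul]
  ring_nf

lemma metaW_eq_one_of_mem_closure {S : Set E}
    (hS : ∀ x ∈ S, ∀ y ∈ S, ∀ z ∈ S, ∀ u ∈ S, metaW x y z u = 1) {x y z u : E}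
    (hx : x ∈ Subgroup.closure S) (hy : y ∈ Subgroup.closure S) (hz : z ∈ Subgroup.closure S)
    (hu : u ∈ Subgroup.closure S) : metaW x y z u = 1 := by
  have extend : ∀ {y z u : E}, (∀ s ∈ S, metaW s y z u = 1) →
      ∀ x ∈ Subgroup.closure S, metaW x y z u = 1 := fun {y z u} h x hx =>
    (Subgroup.closure_le (metaWLeftHom hcomm y z u).ker).2 h hx
  rw [← metaW_rotate hcomm]
  refine extend (fun s hs => ?_) u hu
  rw [← metaW_rotate hcomm]
  refine extend (fun t ht => ?_) y hy
  rw [← metaW_rotate hcomm]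
  refine extend (fun r hr => ?_) z hz
  rw [← metaW_rotate hcomm]
  exact extend (fun q hq => hS q hq t ht r hr s hs) x hx

lemma mem_s2MarginalSet_of_metaW_eq_one {g : E} (h : ∀ y z u, metaW g y z u = 1) :
    g ∈ s2MarginalSet E := by
  intro x y z u
  refine ⟨?_, ?_, ?_, ?_⟩
  · rw [metaW_mul_left hcomm, h, mul_one]
  · rw [← metaW_rotate hcomm x (y * g), ← metaW_rotate hcomm u z x, metaW_mul_left hcomm, h,
      mul_one, metaW_rotate hcomm, metaW_rotate hcomm]
  · rw [metaW_rotate hcomm (z * g) u y x, metaW_mul_left hcomm, h, mul_one,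
      ← metaW_rotate hcomm z u y x]
  · rw [← metaW_rotate hcomm x y z (u * g), metaW_mul_left hcomm, h, mul_one, metaW_rotate hcomm]

lemma pow_pow_four_mem_s2MarginalSet {a b : E} {N : ℕ}
    (hN : ∀ x : E, x ^ N ∈ Subgroup.closure (s2MarginalSet E ∪ {a, b})) (g : E) :
    g ^ (N ^ 4) ∈ s2MarginalSet E := by
  refine mem_s2MarginalSet_of_metaW_eq_one hcomm fun y z u => ?_
  rw [metaW_pow_left hcomm, ← metaW_pow_pow_pow_pow hcomm]
  refine metaW_eq_one_of_mem_closure hcomm ?_ (hN g) (hN y) (hN z) (hN u)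
  intro x hx y hy z hz u hu
  rcases hx with hx | hx
  · exact metaW_eq_one_of_mem_s2MarginalSet hx y z u
  rcases hy with hy | hy
  · rw [← metaW_rotate hcomm x y z u, ← metaW_rotate hcomm u z x y]
    exact metaW_eq_one_of_mem_s2MarginalSet hy x u z
  rcases hz with hz | hz
  · rw [metaW_rotate hcomm z u y x]
    exact metaW_eq_one_of_mem_s2MarginalSet hz u y x
  rcases hu with hu | hu
  · rw [← metaW_rotate hcomm x y z u]
    exact metaW_eq_one_of_mem_s2MarginalSet hu z x y
  exact metaW_eq_one_of_mem_pair hx hy hz hu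

end Marginal

section FreeGenerators

variable {m k : ℕ} (n : Fin k → ℕ)

def freeGen (i : Fin m) : Multiplicative ((Fin m → ℤ) × ((j : Fin k) → ZMod (n j))) :=
  Multiplicative.ofAdd (Pi.single i 1, 0)

lemma freeGen_pow_ne_one {c : ℕ} (hc : c ≠ 0) (i : Fin m) : freeGen n i ^ c ≠ 1 := by
  intro h
  have := congrFun (congrArg (fun g => (Multiplicative.toAdd g).1) h) i
  simp [freeGen, hc] at this

lemma pow_prod_mem_closure_freeGen
    (g : Multiplicative ((Fin m → ℤ) × ((j : Fin k) → ZMod (n j)))) :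
    g ^ (∏ j, n j) ∈ Subgroup.closure (Set.range (freeGen n)) := by
  have htors : (∏ j, n j) • (Multiplicative.toAdd g).2 = 0 := by
    funext j
    simp only [Pi.smul_apply, nsmul_eq_mul, Pi.zero_apply]
    rw [(ZMod.natCast_eq_zero_iff _ _).2 (Finset.dvd_prod_of_mem n (Finset.mem_univ j)), zero_mul]
  have hfree : g ^ (∏ j, n j) = ∏ i, freeGen n i ^ ((∏ j, n j) • (Multiplicative.toAdd g).1) i := by
    apply Multiplicative.toAdd.injective
    simp only [toAdd_pow, toAdd_prod, toAdd_zpow, freeGen, toAdd_ofAdd, Prod.smul_mk, smul_zero,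
      ← prod_mk_sum, Finset.sum_const_zero, ← pi_eq_sum_univ']
    exact Prod.ext rfl htors
  rw [hfree]
  exact Subgroup.prod_mem _ fun i _ => zpow_mem (Subgroup.subset_closure (Set.mem_range_self i)) _

end FreeGenerators

lemma pow_prod_mem_closure_sup {m k : ℕ} {n : Fin k → ℕ} {E : Type} [Group E] {H : Subgroup E}
    [H.Normal] (e : Multiplicative ((Fin m → ℤ) × ((j : Fin k) → ZMod (n j))) ≃* E ⧸ H)
    {A : Fin m → E} (hA : ∀ i, (A i : E ⧸ H) = e (freeGen n i)) (x : E) :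
    x ^ (∏ j, n j) ∈ Subgroup.closure (Set.range A) ⊔ H := by
  rw [← QuotientGroup.ker_mk' H, ← Subgroup.comap_map_eq, Subgroup.mem_comap,
    MonoidHom.map_closure, ← Set.range_comp]
  have hcomp : QuotientGroup.mk' H ∘ A = e ∘ freeGen n := funext hA
  obtain ⟨g, hg⟩ := e.surjective (QuotientGroup.mk' H x)
  rw [hcomp, Set.range_comp, map_pow, ← hg, ← map_pow, ← e.coe_toMonoidHom, ← MonoidHom.map_closure]
  exact Subgroup.mem_map_of_mem _ (pow_prod_mem_closure_freeGen n g)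

lemma exists_range_subset_pair_of_le_two {α : Type} {m : ℕ} (A : Fin m → α) (hm : 0 < m)
    (hm2 : m ≤ 2) : ∃ a b, Set.range A ⊆ {a, b} := by
  refine ⟨A ⟨0, hm⟩, A ⟨m - 1, by omega⟩, ?_⟩
  rintro _ ⟨⟨i, hi⟩, rfl⟩
  obtain rfl | rfl : i = 0 ∨ i = m - 1 := by omega
  exacts [Or.inl rfl, Or.inr rfl]

theorem s2Capable_infinite_fg_abelian_necessary_general (G : Type) [Group G]
    (m k : ℕ) (hm : 1 ≤ m) (n : Fin k → ℕ)
    (hn : ∀ i : Fin k, 2 ≤ n i)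
    (hG : Nonempty (G ≃* Multiplicative ((Fin m → ℤ) × ((i : Fin k) → ZMod (n i)))))
    (hcap : IsS2Capable G) :
    3 ≤ m := by
  by_contra! hm3
  obtain ⟨E, _, H, _, hH, ⟨φ⟩⟩ := hcap
  obtain ⟨ψ⟩ := hG
  let e := ψ.symm.trans φ
  have hcomm (x y : E) : pcomm x y ∈ s2MarginalSet E := hH ▸ pcomm_mem_of_mulEquiv e x y
  choose A hA using fun i => QuotientGroup.mk_surjective (e (freeGen n i))
  obtain ⟨a, b, hab⟩ := exists_range_subset_pair_of_le_two A hm (by omega)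
  have hpow (x : E) : x ^ (∏ j, n j) ∈ Subgroup.closure (s2MarginalSet E ∪ {a, b}) := by
    refine sup_le (Subgroup.closure_mono (hab.trans Set.subset_union_right)) ?_
      (pow_prod_mem_closure_sup e hA x)
    exact fun h hh => Subgroup.subset_closure (Or.inl (hH ▸ hh))
  have hmarg := pow_pow_four_mem_s2MarginalSet hcomm hpow (A ⟨0, hm⟩)
  rw [← hH, SetLike.mem_coe, ← QuotientGroup.eq_one_iff, QuotientGroup.mk_pow, hA, ← map_pow,
    map_eq_one_iff _ e.injective] at hmarg
  have hN : ∏ j, n j ≠ 0 := Finset.prod_ne_zero_iff.2 fun j _ => by have := hn j; omega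
  exact freeGen_pow_ne_one n (pow_ne_zero 4 hN) _ hmarg

/-- If an infinite finitely generated abelian group `ℤ^(m) ⊕ ℤ_{n_1} ⊕ … ⊕ ℤ_{n_k}`
(with `m ≥ 1`, each `n_i ≥ 2`, `n_{i+1} ∣ n_i`) is `S_2`-capable, then `m ≥ 3`. -/
theorem s2Capable_infinite_fg_abelian_necessary (G : Type) [Group G]
    (m k : ℕ) (hm : 1 ≤ m) (n : Fin k → ℕ)
    (hn : ∀ i : Fin k, 2 ≤ n i)
    (hdvd : ∀ i : Fin k, ∀ h : (i : ℕ) + 1 < k, n ⟨(i : ℕ) + 1, h⟩ ∣ n i)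
    (hG : Nonempty (G ≃* Multiplicative ((Fin m → ℤ) × ((i : Fin k) → ZMod (n i)))))
    (hcap : IsS2Capable G) :
    3 ≤ m :=
  s2Capable_infinite_fg_abelian_necessary_general G m k hm n hn hG hcap
end
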